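/- arXiv:2209.08507 — 5 statements merged into one kernel-verified Lean document; each statement's English description precedes it below -/
import Mathlib

section
/- Every square-free word satisfying the separation property (every factor XYX with X nonempty has |Y| > |X|) is steady, i.e., deleting any single letter from it yields a square-free word. -/
/-!
If deleting a letter from `W` leaves a square `XX`, then `W` arises from a word containing `XX` by
inserting one letter `c`. If `c` lands outside `XX`, then `W` contains `XX`. Otherwise, splitting
`X = UV` at the insertion point, `W` contains `U c V U V` (`U` nonempty) or `U V U c V` (`U`, `V`
nonempty). Separation applied to the two occurrences of `U` and to those of `V` gives
`|U| ≤ |V| < |U|`, respectively `|U| < |V| ≤ |U|`.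
-/

/-- A word is square-free if it contains no nonempty factor of the form `X ++ X`. -/
def SquareFree {α : Type*} (W : List α) : Prop :=
  ∀ X : List α, X ≠ [] → ¬ (X ++ X) <:+: W

/-- A square-free word is steady if deleting any single letter leaves it square-free. -/
def Steady {α : Type*} (W : List α) : Prop :=
  SquareFree W ∧ ∀ i < W.length, SquareFree (W.eraseIdx i)

namespace List

variable {α : Type*}

theorem exists_eq_append_cons_eraseIdx {W : List α} {i : ℕ} (hi : i < W.length) :
    ∃ P c S, W = P ++ c :: S ∧ W.eraseIdx i = P ++ S :=
  ⟨W.take i, W[i], W.drop (i + 1),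
    by rw [getElem_cons_drop, take_append_drop], eraseIdx_eq_take_drop_succ W i⟩

theorem square_infix_or_of_square_infix_insert {P S X : List α} {c : α} (hX : X ≠ [])
    (h : X ++ X <:+: P ++ S) :
    X ++ X <:+: P ++ c :: S ∨
      (∃ U V, U ≠ [] ∧ U ++ c :: V ++ U ++ V <:+: P ++ c :: S) ∨
      ∃ U V, U ≠ [] ∧ V ≠ [] ∧ U ++ V ++ U ++ c :: V <:+: P ++ c :: S := by
  obtain ⟨A, B, hAB⟩ := h
  have hsplit : (A ++ X) ++ (X ++ B) = P ++ S := by simp [← hAB]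
  rcases append_eq_append_iff.mp hsplit with ⟨T, hP, hS⟩ | ⟨T, hAX, hS⟩
  · rcases append_eq_append_iff.mp hS with ⟨V, hT, hB⟩ | ⟨V, hTV, hVB⟩
    · subst hP hT hB
      exact .inl ⟨A, V ++ c :: S, by simp⟩
    · subst hP hTV hVB
      rcases eq_or_ne T [] with rfl | hT
      · exact .inr (.inl ⟨V, [], by simpa using hX, A, B, by simp⟩)
      rcases eq_or_ne V [] with rfl | hV
      · exact .inl ⟨A, c :: B, by simp⟩
      exact .inr (.inr ⟨T, V, hT, hV, A, B, by simp⟩)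
  · rcases append_eq_append_iff.mp hAX with ⟨U, hP, hUT⟩ | ⟨U, hA, hT⟩
    · subst hP hUT hS
      rcases eq_or_ne U [] with rfl | hU
      · exact .inl ⟨A ++ [c], B, by simp⟩
      exact .inr (.inl ⟨U, T, hU, A, B, by simp⟩)
    · subst hA hT hS
      exact .inl ⟨P ++ c :: U, B, by simp⟩

end List

def Separated {α : Type*} (W : List α) : Prop :=
  ∀ A X Y B : List α, W = A ++ X ++ Y ++ X ++ B → X ≠ [] → X.length < Y.length

namespace Separated

variable {α : Type*} {W : List α}

theorem length_lt (hW : Separated W) {X Y : List α} (h : X ++ Y ++ X <:+: W) (hX : X ≠ []) :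
    X.length < Y.length := by
  obtain ⟨A, B, rfl⟩ := h
  exact hW A X Y B (by simp) hX

theorem not_infix_insert_left (hW : Separated W) {U V : List α} {c : α} (hU : U ≠ []) :
    ¬ U ++ c :: V ++ U ++ V <:+: W := by
  intro h
  have hUU := hW.length_lt (Y := c :: V) (.trans ⟨[], V, by simp⟩ h) hU
  rcases eq_or_ne V [] with rfl | hV
  · simp only [List.length_singleton, Nat.lt_one_iff, List.length_eq_zero_iff] at hUU
    exact hU hUU
  have hVV := hW.length_lt (Y := U) (.trans ⟨U ++ [c], [], by simp⟩ h) hV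
  simp only [List.length_cons] at hUU
  omega

theorem not_infix_insert_right (hW : Separated W) {U V : List α} {c : α} (hU : U ≠ [])
    (hV : V ≠ []) : ¬ U ++ V ++ U ++ c :: V <:+: W := by
  intro h
  have hUU := hW.length_lt (Y := V) (.trans ⟨[], c :: V, by simp⟩ h) hU
  have hVV := hW.length_lt (Y := U ++ [c]) (.trans ⟨U, [], by simp⟩ h) hV
  simp only [List.length_append, List.length_singleton] at hVV
  omega

end Separated

/-- Every square-free word with the separation property is steady. -/
theorem stmt1 {α : Type*} (W : List α) (hsf : SquareFree W)
    (hsep : ∀ A X Y B : List α, W = A ++ X ++ Y ++ X ++ B → X ≠ [] → X.length < Y.length) :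
    ∀ i < W.length, SquareFree (W.eraseIdx i) := by
  intro i hi X hX hXX
  obtain ⟨P, c, S, rfl, hPS⟩ := List.exists_eq_append_cons_eraseIdx hi
  rw [hPS] at hXX
  have hW : Separated (P ++ c :: S) := hsep
  rcases List.square_infix_or_of_square_infix_insert hX hXX with
    h | ⟨U, V, hU, h⟩ | ⟨U, V, hU, hV, h⟩
  · exact hsf X hX h
  · exact hW.not_infix_insert_left hU h
  · exact hW.not_infix_insert_right hU hV h
end

section
/- Let W = w_1 w_2 ... w_n be a steady word of length n ≥ 2 over an alphabet A. Then the word w_2 w_1 w_2 ... w_n, obtained by prepending the second letter of W, is square-free. -/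
lemma eraseIdx_mid {α : Type*} (l₁ : List α) (a : α) (l₂ : List α) :
    (l₁ ++ a :: l₂).eraseIdx l₁.length = l₁ ++ l₂ := by
  induction l₁ with
  | nil => rfl
  | cons b l ih => simpa [List.eraseIdx] using ih

/-- For a steady word `w₁ w₂ ⋯ wₙ` of length at least 2, prepending the second
letter yields the square-free word `w₂ w₁ w₂ ⋯ wₙ`. -/
theorem stmt7 {α : Type*} (w₁ w₂ : α) (T : List α)
    (h : Steady (w₁ :: w₂ :: T)) :
    SquareFree (w₂ :: w₁ :: w₂ :: T) := by
  rintro X hX ⟨s, t, hst⟩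
  match s with
  | a :: s' =>
    simp only [List.cons_append, List.cons.injEq] at hst
    exact h.1 X hX ⟨s', t, by rw [← hst.2]⟩
  | [] =>
    match X with
    | [] => exact hX rfl
    | x :: X' =>
      simp only [List.nil_append, List.cons_append, List.cons.injEq, List.append_assoc] at hst
      obtain ⟨rfl, hst⟩ := hst
      match X' with
      | [] =>
        simp only [List.nil_append, List.cons.injEq] at hst
        obtain ⟨rfl, rfl⟩ := hst
        exact h.1 [x] (by simp) ⟨[], T, by simp⟩
      | y :: Y =>
        have hlen : (y :: Y).length < (w₁ :: x :: T).length := by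
          rw [← hst]; simp
        refine h.2 (y :: Y).length hlen (y :: Y) (by simp) ⟨[], t, ?_⟩
        have h2 := eraseIdx_mid (y :: Y) x (y :: Y ++ t)
        rw [← hst]
        simp only [List.cons_append] at h2 ⊢
        rw [h2]
        simp
end

section
/- Let A be an alphabet with at least three letters. Every steady word over A is bifurcate over A: for every position i from 0 to n (where n is the length of the word) there exists a letter x in A such that inserting x at position i yields a square-free word. -/
namespace List

variable {α : Type*}

theorem append_eq_append_cons_iff {A B L R : List α} {x : α} :
    A ++ B = L ++ x :: R ↔
      (∃ S, A = L ++ x :: S ∧ R = S ++ B) ∨ ∃ T, B = T ++ x :: R ∧ L = A ++ T := by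
  rw [append_eq_append_iff]
  constructor
  · rintro (⟨T, rfl, hB⟩ | ⟨S, rfl, hR⟩)
    · exact .inr ⟨T, hB, rfl⟩
    · cases S with
      | nil => exact .inr ⟨[], by simpa using hR.symm, by simp⟩
      | cons y S =>
        obtain ⟨rfl, rfl⟩ := cons_eq_cons.mp hR
        exact .inl ⟨S, rfl, rfl⟩
  · rintro (⟨S, rfl, rfl⟩ | ⟨T, rfl, rfl⟩)
    · exact .inr ⟨x :: S, by simp, rfl⟩
    · exact .inl ⟨T, by simp, rfl⟩

theorem IsInfix.infix_append_or_straddle {Y L R : List α} {x : α}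
    (h : Y <:+: L ++ x :: R) :
    Y <:+: L ++ R ∨ ∃ P Q Y₁ Y₂, Y = Y₁ ++ x :: Y₂ ∧ L = P ++ Y₁ ∧ R = Y₂ ++ Q := by
  obtain ⟨P, Q, h⟩ := h
  rcases append_eq_append_cons_iff.mp h with ⟨S, hPY, rfl⟩ | ⟨T, rfl, rfl⟩
  · rcases append_eq_append_cons_iff.mp hPY with ⟨S', rfl, rfl⟩ | ⟨T, rfl, rfl⟩
    · exact .inl ⟨L ++ S', Q, by simp⟩
    · exact .inr ⟨P, Q, T, S, rfl, rfl, rfl⟩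
  · exact .inl ⟨P, T ++ R, by simp⟩

end List

namespace Steady

variable {α : Type*}

theorem squareFree_of_eq_append_cons {W L R : List α} {y : α} (hW : Steady W)
    (h : W = L ++ y :: R) : SquareFree (L ++ R) := by
  have := hW.2 L.length (by simp [h])
  rwa [h, List.eraseIdx_append_of_length_le le_rfl, Nat.sub_self, List.eraseIdx_cons_zero]
    at this

theorem squareFree_append_cons {L R : List α} {x : α} (hW : Steady (L ++ R))
    (hL : L.getLast? ≠ some x) (hR : R.head? ≠ some x) : SquareFree (L ++ x :: R) := by
  intro X hX hXX
  rcases hXX.infix_append_or_straddle with hXX | ⟨P, Q, Y₁, Y₂, hY, rfl, rfl⟩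
  · exact hW.1 X hX hXX
  rcases List.append_eq_append_cons_iff.mp hY with ⟨S, rfl, rfl⟩ | ⟨T, rfl, rfl⟩
  · by_cases hYS : Y₁ ++ S = []
    · obtain ⟨rfl, rfl⟩ := List.append_eq_nil_iff.mp hYS
      simp at hR
    · exact hW.squareFree_of_eq_append_cons (L := P ++ Y₁ ++ S ++ Y₁) (y := x) (R := S ++ Q)
        (by simp) (Y₁ ++ S) hYS ⟨P, Q, by simp⟩
  · by_cases hTY : T ++ Y₂ = []
    · obtain ⟨rfl, rfl⟩ := List.append_eq_nil_iff.mp hTY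
      simp at hL
    · exact hW.squareFree_of_eq_append_cons (L := P ++ T) (y := x) (R := Y₂ ++ T ++ Y₂ ++ Q)
        (by simp) (T ++ Y₂) hTY ⟨P, Q, by simp⟩

end Steady

theorem exists_mem_ne_of_three_distinct {α : Type*} {A : Set α}
    (hA : ∃ a b c, a ∈ A ∧ b ∈ A ∧ c ∈ A ∧ a ≠ b ∧ a ≠ c ∧ b ≠ c)
    (o₁ o₂ : Option α) : ∃ x ∈ A, o₁ ≠ some x ∧ o₂ ≠ some x := by
  obtain ⟨a, b, c, ha, hb, hc, hab, hac, hbc⟩ := hA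
  by_contra! h
  have hmem : ∀ x ∈ A, o₁ = some x ∨ o₂ = some x :=
    fun x hx => or_iff_not_imp_left.mpr (h x hx)
  rcases hmem a ha with rfl | rfl <;> rcases hmem b hb with h₁ | h₁ <;>
    rcases hmem c hc with h₂ | h₂ <;> simp_all

theorem stmt8_general {α : Type*} (A : Set α)
    (hA : ∃ a b c, a ∈ A ∧ b ∈ A ∧ c ∈ A ∧ a ≠ b ∧ a ≠ c ∧ b ≠ c)
    (W : List α) (hsteady : Steady W) :
    ∀ i ≤ W.length, ∃ x ∈ A, SquareFree (W.take i ++ x :: W.drop i) := by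
  intro i _
  obtain ⟨x, hxA, hxL, hxR⟩ :=
    exists_mem_ne_of_three_distinct hA (W.take i).getLast? (W.drop i).head?
  rw [← W.take_append_drop i] at hsteady
  exact ⟨x, hxA, hsteady.squareFree_append_cons hxL hxR⟩

/-- Over an alphabet with at least three letters, every steady word is bifurcate:
at every position some letter of the alphabet gives a square-free extension. -/
theorem stmt8 {α : Type*} (A : Set α)
    (hA : ∃ a b c, a ∈ A ∧ b ∈ A ∧ c ∈ A ∧ a ≠ b ∧ a ≠ c ∧ b ≠ c)
    (W : List α) (hW : ∀ l ∈ W, l ∈ A) (hsteady : Steady W) :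
    ∀ i ≤ W.length, ∃ x ∈ A, SquareFree (W.take i ++ x :: W.drop i) :=
  stmt8_general A hA W hsteady
end

section
/- Let W = w_1...w_n be a steady word with n ≥ 4 and let 2 ≤ j ≤ n−2. Then the letters w_j, w_{j+1}, w_{j+2} are pairwise distinct, and the extension of W obtained by inserting the letter w_{j+2} between positions j and j+1 is square-free. -/
private lemma erase_mid {α : Type*} (p q s : List α) (k : ℕ) (hk : k < q.length) :
    (p ++ q ++ s).eraseIdx (p.length + k) = p ++ q.eraseIdx k ++ s := by
  rw [List.append_assoc, List.eraseIdx_append_of_length_le (Nat.le_add_right _ _),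
    Nat.add_sub_cancel_left, List.eraseIdx_append_of_lt_length hk, List.append_assoc]

private lemma sf_adj {α : Type*} {W : List α} (hsf : SquareFree W) {i k : ℕ}
    (hik : k = i + 1) (hk : k < W.length) : W[i]'(by omega) ≠ W[k] := by
  subst hik
  intro he
  apply hsf [W[i]'(by omega)] (by simp)
  refine ⟨W.take i, W.drop (i + 2), ?_⟩
  have h1 : W[i]'(by omega) :: W.drop (i + 1) = W.drop i := List.getElem_cons_drop ..
  have h2 : W[i + 1]'hk :: W.drop (i + 2) = W.drop (i + 1) := List.getElem_cons_drop ..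
  conv_rhs => rw [← List.take_append_drop i W, ← h1, ← h2]
  simp [he]

private lemma steady_gap {α : Type*} {W : List α} (hst : Steady W) {i k : ℕ}
    (hik : k = i + 2) (hk : k < W.length) : W[i]'(by omega) ≠ W[k] := by
  subst hik
  intro he
  apply hst.2 (i + 1) (by omega) [W[i]'(by omega)] (by simp)
  refine ⟨W.take i, W.drop (i + 3), ?_⟩
  have h2 : W[i + 2]'hk :: W.drop (i + 3) = W.drop (i + 2) := List.getElem_cons_drop ..
  have ht : W.take (i + 1) = W.take i ++ [W[i]'(by omega)] := by
    rw [List.take_succ, List.getElem?_eq_getElem (by omega)]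
    rfl
  rw [List.eraseIdx_eq_take_drop_succ, ht, ← h2]
  simp [he]

/-- In a steady word `W = w₁ ⋯ wₙ` with `n ≥ 4` and `2 ≤ j ≤ n - 2`, the letters
`w_j, w_{j+1}, w_{j+2}` are pairwise distinct, and inserting `w_{j+2}` between
positions `j` and `j+1` gives a square-free word. (Indexing: `w_j = W[j-1]`.) -/
theorem stmt14 {α : Type*} (W : List α) (hsteady : Steady W)
    (hn : 4 ≤ W.length) (j : ℕ) (hj : 2 ≤ j) (hj' : j + 2 ≤ W.length) :
    (W[j - 1]'(by omega) ≠ W[j]'(by omega) ∧ W[j - 1]'(by omega) ≠ W[j + 1]'(by omega) ∧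
      W[j]'(by omega) ≠ W[j + 1]'(by omega)) ∧
    SquareFree (W.take j ++ W[j + 1]'(by omega) :: W.drop j) := by
  have h1 : W[j - 1]'(by omega) ≠ W[j]'(by omega) :=
    sf_adj hsteady.1 (by omega) (by omega)
  have h2 : W[j - 1]'(by omega) ≠ W[j + 1]'(by omega) :=
    steady_gap hsteady (by omega) (by omega)
  have h3 : W[j]'(by omega) ≠ W[j + 1]'(by omega) :=
    sf_adj hsteady.1 (by omega) (by omega)
  refine ⟨⟨h1, h2, h3⟩, ?_⟩
  set x := W[j + 1]'(by omega) with hx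
  set W' := W.take j ++ x :: W.drop j with hW'
  have htlen : (W.take j).length = j := by rw [List.length_take]; omega
  have hWerase : W'.eraseIdx j = W := by
    rw [hW', List.eraseIdx_append_of_length_le htlen.le, htlen, Nat.sub_self,
      List.eraseIdx_zero, List.tail_cons, List.take_append_drop]
  rintro X hXne ⟨p, s, hps⟩
  have hm1 : 0 < X.length := List.length_pos_iff.mpr hXne
  have hlenW' : W'.length = W.length + 1 := by
    rw [hW']
    simp only [List.length_append, List.length_cons, List.length_take, List.length_drop]
    omega
  have hlen2 : p.length + X.length + X.length + s.length = W.length + 1 := by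
    have := congrArg List.length hps
    simp only [List.length_append, hlenW'] at this
    omega
  rcases lt_or_ge j p.length with hcase | hcase
  · -- insertion strictly before the square
    have hW : p.eraseIdx j ++ (X ++ X) ++ s = W := by
      have e1 : p ++ (X ++ X) ++ s = p ++ (X ++ X ++ s) := by simp [List.append_assoc]
      rw [← hWerase, ← hps, e1,
        List.eraseIdx_append_of_lt_length hcase]
      simp [List.append_assoc]
    exact hsteady.1 X hXne ⟨p.eraseIdx j, s, hW⟩
  rcases le_or_gt (p.length + X.length + X.length) j with hcase' | hcase'
  · -- insertion strictly after the square
    have hW : p ++ (X ++ X) ++ s.eraseIdx (j - (p.length + X.length + X.length)) = W := by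
      rw [← hWerase, ← hps,
        List.eraseIdx_append_of_length_le (show (p ++ (X ++ X)).length ≤ j by
          simp only [List.length_append]; omega)]
      congr 2
      simp only [List.length_append]
      omega
    exact hsteady.1 X hXne ⟨p, _, hW⟩
  rcases lt_or_ge j (p.length + X.length) with hcase2 | hcase2
  · -- insertion inside the first copy of X
    rcases Nat.lt_or_ge X.length 2 with hm2 | hm2
    · -- |X| = 1
      obtain ⟨c, rfl⟩ : ∃ c, X = [c] := by
        cases X with
        | nil => exact absurd rfl hXne
        | cons y t =>
          cases t with
          | nil => exact ⟨y, rfl⟩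
          | cons z u =>
            exfalso
            simp only [List.length_cons] at hm2
            omega
      have hm' : ([c] : List α).length = 1 := rfl
      have hps' : p ++ (c :: c :: s) = W.take j ++ (x :: W.drop j) := by
        simpa [hW', List.append_assoc] using hps
      have htail := (List.append_inj hps' (by rw [htlen]; omega)).2
      have hdj : W[j]'(by omega) :: W.drop (j + 1) = W.drop j := List.getElem_cons_drop ..
      rw [← hdj] at htail
      obtain ⟨hc, htail2⟩ := List.cons.inj htail
      obtain ⟨hc2, -⟩ := List.cons.inj htail2
      exact h3 (hc2.symm.trans hc)
    · -- |X| ≥ 2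
      obtain ⟨r, hrm, rfl⟩ : ∃ r, r < X.length ∧ j = p.length + r :=
        ⟨j - p.length, by omega, by omega⟩
      have hern : (X.eraseIdx r).length = X.length - 1 := by
        rw [List.length_eraseIdx]
        simp [hrm]
      have hW : p ++ X.eraseIdx r ++ (X ++ s) = W := by
        have e1 : p ++ (X ++ X) ++ s = p ++ X ++ (X ++ s) := by simp [List.append_assoc]
        rw [← hWerase, ← hps, e1, erase_mid p X (X ++ s) r hrm]
      have hW2 : (p ++ X.eraseIdx r) ++ X.eraseIdx r ++ s
          = W.eraseIdx ((p ++ X.eraseIdx r).length + r) := by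
        have e2 : p ++ X.eraseIdx r ++ (X ++ s) = (p ++ X.eraseIdx r) ++ X ++ s := by
          simp [List.append_assoc]
        rw [← hW, e2, erase_mid (p ++ X.eraseIdx r) X s r hrm]
      apply hsteady.2 ((p ++ X.eraseIdx r).length + r)
        (by simp only [List.length_append, hern]; omega)
        (X.eraseIdx r) (by rw [← List.length_pos_iff, hern]; omega)
      exact ⟨p, s, by rw [← hW2]; simp [List.append_assoc]⟩
  · -- insertion inside the second copy of X
    rcases Nat.lt_or_ge X.length 2 with hm2 | hm2
    · -- |X| = 1
      obtain ⟨c, rfl⟩ : ∃ c, X = [c] := by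
        cases X with
        | nil => exact absurd rfl hXne
        | cons y t =>
          cases t with
          | nil => exact ⟨y, rfl⟩
          | cons z u =>
            exfalso
            simp only [List.length_cons] at hm2
            omega
      have hm' : ([c] : List α).length = 1 := rfl
      have hps' : (p ++ [c]) ++ (c :: s) = W.take j ++ (x :: W.drop j) := by
        simpa [hW', List.append_assoc] using hps
      have hinj := List.append_inj hps'
        (by simp only [List.length_append, htlen, hm']; omega)
      have hc : c = x := (List.cons.inj hinj.2).1
      have htj : W.take j = W.take (j - 1) ++ [W[j - 1]'(by omega)] := by
        conv_lhs => rw [show j = (j - 1) + 1 from by omega]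
        rw [List.take_succ, List.getElem?_eq_getElem (by omega)]
        rfl
      have h4 := hinj.1
      rw [htj] at h4
      have hc2 : c = W[j - 1]'(by omega) := by
        have := (List.append_inj h4 (by simp only [List.length_take]; omega)).2
        simpa using this
      exact h2 (hc2.symm.trans hc)
    · -- |X| ≥ 2
      obtain ⟨r, hrm, rfl⟩ : ∃ r, r < X.length ∧ j = p.length + X.length + r :=
        ⟨j - p.length - X.length, by omega, by omega⟩
      have hern : (X.eraseIdx r).length = X.length - 1 := by
        rw [List.length_eraseIdx]
        simp [hrm]
      have hW : (p ++ X) ++ X.eraseIdx r ++ s = W := by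
        have e1 : p ++ (X ++ X) ++ s = (p ++ X) ++ X ++ s := by simp [List.append_assoc]
        rw [← hWerase, ← hps, e1,
          show p.length + X.length + r = (p ++ X).length + r by
            simp only [List.length_append],
          erase_mid (p ++ X) X s r hrm]
      have hW2 : p ++ X.eraseIdx r ++ (X.eraseIdx r ++ s) = W.eraseIdx (p.length + r) := by
        have e2 : (p ++ X) ++ X.eraseIdx r ++ s = p ++ X ++ (X.eraseIdx r ++ s) := by
          simp [List.append_assoc]
        rw [← hW, e2, erase_mid p X (X.eraseIdx r ++ s) r hrm]
      apply hsteady.2 (p.length + r) (by omega)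
        (X.eraseIdx r) (by rw [← List.length_pos_iff, hern]; omega)
      exact ⟨p, s, by rw [← hW2]; simp [List.append_assoc]⟩
end

section
/- Let (A_1, A_2, ...) be a sequence of alphabets each of size 7. For every N there exist at least 4^N steady words w = w_1 w_2 ... w_N with w_i ∈ A_i for all i. -/
section

variable {α : Type*} {a c : α} {v w : List α} {ℓ j : ℕ}

section Words

open List

theorem SquareFree.of_infix (hw : SquareFree w) (h : v <:+: w) : SquareFree v :=
  fun X hX hXX => hw X hX (hXX.trans h)

theorem SquareFree.nil : SquareFree ([] : List α) :=
  fun X hX hXX => hX (by simpa using hXX.length_le)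

theorem SquareFree.exists_eq_of_not_append_singleton (hv : SquareFree v)
    (h : ¬ SquareFree (v ++ [a])) : ∃ p Y, v = p ++ Y ++ a :: Y := by
  simp only [SquareFree, not_forall, not_not] at h
  obtain ⟨X, hX, s, t, hst⟩ := h
  rcases t.eq_nil_or_concat with rfl | ⟨t, b, rfl⟩
  · obtain ⟨Y, c, rfl⟩ := X.eq_nil_or_concat.resolve_left hX
    have : (s ++ Y ++ c :: Y) ++ [c] = v ++ [a] := by simpa using hst
    obtain ⟨hv, hc⟩ := append_inj' this rfl
    cases hc
    exact ⟨s, Y, hv.symm⟩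
  · refine absurd ⟨s, t, ?_⟩ (hv X hX)
    have : (s ++ (X ++ X) ++ t) ++ [b] = v ++ [a] := by simpa using hst
    exact append_inj_left' this rfl

theorem Steady.nil : Steady ([] : List α) :=
  ⟨SquareFree.nil, by simp⟩

theorem Steady.take (hw : Steady w) (m : ℕ) : Steady (w.take m) := by
  refine ⟨hw.1.of_infix (w.take_prefix m).isInfix, fun i hi => ?_⟩
  have hi' : i < m := by simp at hi; omega
  refine (hw.2 i (by simp at hi; omega)).of_infix (IsPrefix.isInfix ?_)
  rw [eraseIdx_eq_take_drop_succ, eraseIdx_eq_take_drop_succ, take_take, min_eq_left hi'.le,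
    drop_take]
  exact (prefix_append_right_inj _).2 (take_prefix _ _)

theorem Steady.eq_nil_of_infix {Y : List α} (hw : Steady w) (h : Y ++ a :: Y <:+: w) :
    Y = [] := by
  obtain ⟨s, t, rfl⟩ := h
  by_contra hY
  refine hw.2 (s ++ Y).length (by simp) Y hY ⟨s, t, ?_⟩
  rw [show s ++ (Y ++ a :: Y) ++ t = (s ++ Y) ++ (a :: (Y ++ t)) by simp,
    eraseIdx_append_of_length_le le_rfl, Nat.sub_self]
  simp

theorem List.eq_take_eraseIdx_append_cons_drop {l : List α} {i : ℕ} (h : i < l.length) :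
    l = (l.eraseIdx i).take i ++ l[i] :: (l.eraseIdx i).drop i := by
  have hi : (l.take i).length = i := by simp; omega
  rw [eraseIdx_eq_take_drop_succ, take_left' hi, drop_left' hi, ← drop_eq_getElem_cons,
    take_append_drop]

/-- `w = p Z' c Z`, where `Z'` is `Z` with a letter `x` inserted at position `j`: deleting `x`
turns `w ++ [c]` into `p (Z c) (Z c)`. -/
def NearSquareLeft (w : List α) (ℓ j : ℕ) (c : α) : Prop :=
  ∃ p Z x, Z.length = ℓ ∧ w = p ++ Z.take j ++ x :: Z.drop j ++ c :: Z

def NearSquareRight (w : List α) (ℓ j : ℕ) (c : α) : Prop :=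
  ∃ p Z x, Z.length = ℓ ∧ w = p ++ Z ++ c :: Z.take j ++ x :: Z.drop j

def IsObstruction (w : List α) (a : α) : Prop :=
  (∃ u, w = u ++ [a]) ∨ (∃ u x, w = u ++ [a, x]) ∨
    (∃ ℓ, ∃ j ∈ Finset.Icc 1 ℓ, NearSquareLeft w ℓ j a) ∨
    (∃ ℓ, ∃ j ∈ Finset.range ℓ, NearSquareRight w ℓ j a)

theorem Steady.isObstruction_of_eraseIdx_eq (hw : Steady w) {i : ℕ} (hi : i < w.length)
    {p Y : List α} (h : w.eraseIdx i = p ++ Y ++ a :: Y) : IsObstruction w a := by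
  have hlen : w.length = p.length + 2 * Y.length + 2 := by
    have := congrArg length h; simp [length_eraseIdx_of_lt hi] at this; omega
  have hw' := eq_take_eraseIdx_append_cons_drop hi
  rw [h, append_assoc] at hw'
  set x := w[i]
  -- `w` is `p Y a Y` with `x` inserted at `i`: into `p`, into the first `Y`, or after `a`.
  rcases le_or_gt i p.length with hip | hip
  · rw [take_append_of_le_length hip, drop_append_of_le_length hip] at hw'
    obtain rfl : Y = [] := hw.eq_nil_of_infix (a := a) ⟨p.take i ++ x :: p.drop i, [], by
      rw [hw']; simp⟩
    exact Or.inl ⟨p.take i ++ x :: p.drop i, by rw [hw']; simp⟩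
  obtain ⟨k, rfl⟩ : ∃ k, i = p.length + k := ⟨i - p.length, by omega⟩
  rw [take_length_add_append, drop_length_add_append] at hw'
  rcases le_or_gt k Y.length with hk | hk
  · rw [take_append_of_le_length hk, drop_append_of_le_length hk] at hw'
    exact Or.inr (Or.inr (Or.inl
      ⟨Y.length, k, by simp; omega, p, Y, x, rfl, by rw [hw']; simp⟩))
  obtain ⟨m, rfl⟩ : ∃ m, k = Y.length + (m + 1) := ⟨k - Y.length - 1, by omega⟩
  rw [take_length_add_append, drop_length_add_append, take_succ_cons, drop_succ_cons] at hw'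
  rcases lt_or_eq_of_le (show m ≤ Y.length by omega) with hm | rfl
  · exact Or.inr (Or.inr (Or.inr
      ⟨Y.length, m, Finset.mem_range.2 hm, p, Y, x, rfl, by rw [hw']; simp⟩))
  · rw [take_length, drop_length] at hw'
    obtain rfl : Y = [] := hw.eq_nil_of_infix (a := a) ⟨p, [x], by rw [hw']⟩
    exact Or.inr (Or.inl ⟨p, x, by rw [hw']; simp⟩)

theorem Steady.isObstruction_of_not_steady_append (hw : Steady w)
    (ha : ¬ Steady (w ++ [a])) : IsObstruction w a := by
  by_cases hsf : SquareFree (w ++ [a])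
  · obtain ⟨i, hi, hsq⟩ :
        ∃ i < (w ++ [a]).length, ¬ SquareFree ((w ++ [a]).eraseIdx i) := by
      simpa [Steady, hsf] using ha
    rcases lt_or_eq_of_le (show i ≤ w.length by simpa [Nat.lt_succ_iff] using hi) with hi | rfl
    · rw [eraseIdx_append_of_lt_length hi] at hsq
      obtain ⟨p, Y, h⟩ := (hw.2 i hi).exists_eq_of_not_append_singleton hsq
      exact hw.isObstruction_of_eraseIdx_eq hi h
    · rw [eraseIdx_append_of_length_le le_rfl, Nat.sub_self] at hsq
      exact absurd (by simpa using hw.1) hsq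
  · obtain ⟨p, Y, rfl⟩ := hw.1.exists_eq_of_not_append_singleton hsf
    obtain rfl : Y = [] := hw.eq_nil_of_infix (a := a) ⟨p, [], by simp⟩
    exact Or.inl ⟨p, by simp⟩

theorem NearSquareLeft.add_two_le_length (h : NearSquareLeft w ℓ j c) : ℓ + 2 ≤ w.length := by
  obtain ⟨p, Z, x, rfl, rfl⟩ := h
  simp; omega

theorem NearSquareLeft.getD_eq (h : NearSquareLeft w ℓ j c) (d : α) :
    w.getD (w.length - ℓ - 1) d = c := by
  obtain ⟨p, Z, x, rfl, rfl⟩ := h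
  rw [getD_append_right _ _ _ _ (by simp; omega)]
  simp only [length_append, length_take, length_cons, length_drop]
  rw [show _ - _ = 0 by omega, getD_cons_zero]

theorem NearSquareLeft.eq_of_take_eq {w' : List α} {c' : α} (h : NearSquareLeft w ℓ j c)
    (h' : NearSquareLeft w' ℓ j c') (hlen : w.length = w'.length)
    (htake : w.take (w.length - ℓ) = w'.take (w.length - ℓ)) : w = w' := by
  obtain ⟨p, Z, x, rfl, rfl⟩ := h
  obtain ⟨p', Z', x', hZ', rfl⟩ := h'
  simp only [length_append, length_take, length_cons, length_drop] at hlen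
  have hsplit (p Z : List α) (x c : α) : p ++ Z.take j ++ x :: Z.drop j ++ c :: Z =
      (p ++ (Z.take j ++ x :: Z.drop j) ++ [c]) ++ Z := by simp
  rw [hsplit, hsplit] at htake ⊢
  rw [take_left' (by simp; omega), take_left' (by simp; omega)] at htake
  obtain ⟨hQ, -⟩ := append_inj' htake rfl
  obtain ⟨-, hZ⟩ := append_inj hQ (by omega)
  obtain ⟨hZt, -, hZd⟩ : Z.take j = Z'.take j ∧ x = x' ∧ Z.drop j = Z'.drop j := by
    simpa using append_inj hZ (by simp; omega)
  obtain rfl : Z = Z' := by rw [← take_append_drop j Z, hZt, hZd, take_append_drop]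
  rw [htake]

theorem NearSquareRight.add_two_le_length (h : NearSquareRight w ℓ j c) :
    ℓ + 2 ≤ w.length := by
  obtain ⟨p, Z, x, rfl, rfl⟩ := h
  simp; omega

theorem NearSquareRight.getD_eq (h : NearSquareRight w ℓ j c) (d : α) :
    w.getD (w.length - ℓ - 2) d = c := by
  obtain ⟨p, Z, x, rfl, rfl⟩ := h
  have hi : (p ++ Z ++ c :: Z.take j ++ x :: Z.drop j).length - Z.length - 2 =
      (p ++ Z).length := by
    simp; omega
  rw [hi, show p ++ Z ++ c :: Z.take j ++ x :: Z.drop j =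
    p ++ Z ++ c :: (Z.take j ++ x :: Z.drop j) by simp]
  simp

theorem NearSquareRight.exists_nearSquareLeft (h : NearSquareRight w ℓ 0 c) :
    ∃ x, NearSquareLeft w ℓ ℓ x := by
  obtain ⟨p, Z, x, rfl, rfl⟩ := h
  exact ⟨x, p, Z, c, rfl, by simp⟩

theorem NearSquareRight.eq_of_take_eq {w' : List α} {c' : α} (hj : j ≤ ℓ) (d : α)
    (h : NearSquareRight w ℓ j c) (h' : NearSquareRight w' ℓ j c') (hlen : w.length = w'.length)
    (htake : w.take (w.length - ℓ - 1) = w'.take (w.length - ℓ - 1))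
    (hget : w.getD (w.length - ℓ - 1 + j) d = w'.getD (w.length - ℓ - 1 + j) d) : w = w' := by
  obtain ⟨p, Z, x, rfl, rfl⟩ := h
  obtain ⟨p', Z', x', hZ', rfl⟩ := h'
  simp only [length_append, length_take, length_cons, length_drop] at hlen
  have hsplit (p Z : List α) (x c : α) : p ++ Z ++ c :: Z.take j ++ x :: Z.drop j =
      (p ++ Z ++ [c]) ++ Z.take j ++ x :: Z.drop j := by simp
  have hi : (p ++ Z ++ c :: Z.take j ++ x :: Z.drop j).length - Z.length - 1 =
      (p ++ Z ++ [c]).length := by simp; omega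
  rw [hi] at htake hget
  rw [hsplit, hsplit] at htake hget ⊢
  rw [append_assoc _ (take _ _), append_assoc _ (take _ _), take_left' rfl,
    take_left' (by simp; omega)] at htake
  obtain ⟨hpZ, hc⟩ := append_inj' htake rfl
  cases hc
  obtain ⟨rfl, rfl⟩ := append_inj hpZ (by omega)
  rw [show (p ++ Z ++ [c]).length + j = (p ++ Z ++ [c] ++ Z.take j).length by simp; omega]
    at hget
  obtain rfl : x = x' := by simpa using hget
  rfl

end Words

section Counting

open Finset

open scoped Classical

variable {A : ℕ → Finset α} {n : ℕ}

noncomputable def steadyWords (A : ℕ → Finset α) (n : ℕ) : Finset (List α) :=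
  {w ∈ (Fintype.piFinset fun i : Fin n => A i).image List.ofFn | Steady w}

theorem mem_steadyWords :
    w ∈ steadyWords A n ↔ w.length = n ∧ Steady w ∧ ∀ i (h : i < w.length), w[i] ∈ A i := by
  simp only [steadyWords, mem_filter, mem_image, Fintype.mem_piFinset]
  constructor
  · rintro ⟨⟨f, hf, rfl⟩, hw⟩
    exact ⟨List.length_ofFn, hw, fun i hi => by simpa using hf ⟨i, by simpa using hi⟩⟩
  · rintro ⟨rfl, hw, hA⟩
    exact ⟨⟨fun i => w[i], fun i => hA i i.2, List.ofFn_getElem⟩, hw⟩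

theorem take_mem_steadyWords (hw : w ∈ steadyWords A n) {m : ℕ} (hm : m ≤ n) :
    w.take m ∈ steadyWords A m := by
  obtain ⟨hlen, hw, hA⟩ := mem_steadyWords.1 hw
  exact mem_steadyWords.2
    ⟨by simp; omega, hw.take m, fun i hi => by simpa using hA i (by simp at hi; omega)⟩

theorem getD_mem_of_mem_steadyWords (hw : w ∈ steadyWords A n) {i : ℕ} (hi : i < n) (d : α) :
    w.getD i d ∈ A i := by
  obtain ⟨hlen, -, hA⟩ := mem_steadyWords.1 hw
  rw [List.getD_eq_getElem _ _ (by omega)]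
  exact hA i _

theorem card_steadyWords_zero : #(steadyWords A 0) = 1 := by
  rw [card_eq_one]
  refine ⟨[], eq_singleton_iff_unique_mem.2 ⟨mem_steadyWords.2 ⟨rfl, Steady.nil, by simp⟩, ?_⟩⟩
  exact fun w hw => List.eq_nil_of_length_eq_zero (mem_steadyWords.1 hw).1

theorem sum_card_filter_steady_append_le :
    ∑ w ∈ steadyWords A n, #{a ∈ A n | Steady (w ++ [a])} ≤ #(steadyWords A (n + 1)) := by
  rw [← card_sigma]
  refine card_le_card_of_injOn (fun q => q.1 ++ [q.2]) ?_ ?_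
  · rintro ⟨w, a⟩ h
    simp only [coe_sigma, Set.mem_sigma_iff, mem_coe, mem_filter, mem_steadyWords] at h ⊢
    obtain ⟨⟨rfl, -, hA⟩, ha, hwa⟩ := h
    refine ⟨by simp, hwa, fun i hi => ?_⟩
    rw [List.getElem_append]
    split_ifs with hi'
    · exact hA i hi'
    · simpa [show i = w.length by simp at hi; omega] using ha
  · rintro ⟨w, a⟩ h ⟨w', a'⟩ h' heq
    simp only [coe_sigma, Set.mem_sigma_iff, mem_coe, mem_steadyWords] at h h'
    obtain ⟨rfl, hc⟩ := List.append_inj heq (h.1.1.trans h'.1.1.symm)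
    cases hc
    rfl

def HasNearSquareLeft (w : List α) (ℓ : ℕ) : Prop := ∃ j ∈ Icc 1 ℓ, ∃ c, NearSquareLeft w ℓ j c

def HasNearSquareRight (w : List α) (ℓ : ℕ) : Prop := ∃ j ∈ range ℓ, ∃ c, NearSquareRight w ℓ j c

theorem card_filter_not_steady_append_le (hw : Steady w) (d : α) (s : Finset α) :
    #{a ∈ s | ¬ Steady (w ++ [a])} ≤
      2 + #{ℓ ∈ range w.length | HasNearSquareLeft w ℓ} +
        #{ℓ ∈ range w.length | HasNearSquareRight w ℓ} := by
  set L₁ := {ℓ ∈ range w.length | HasNearSquareLeft w ℓ}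
  set L₂ := {ℓ ∈ range w.length | HasNearSquareRight w ℓ}
  have hsub : {a ∈ s | ¬ Steady (w ++ [a])} ⊆
      {w.getD (w.length - 1) d, w.getD (w.length - 2) d} ∪
        L₁.image (fun ℓ => w.getD (w.length - ℓ - 1) d) ∪
        L₂.image (fun ℓ => w.getD (w.length - ℓ - 2) d) := by
    intro a ha
    simp only [mem_union, mem_insert, mem_singleton, mem_image]
    rcases hw.isObstruction_of_not_steady_append (mem_filter.1 ha).2 with
      ⟨u, rfl⟩ | ⟨u, x, rfl⟩ | ⟨ℓ, j, hj, h⟩ | ⟨ℓ, j, hj, h⟩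
    · simp
    · simp
    · have := h.add_two_le_length
      exact Or.inl (Or.inr ⟨ℓ, mem_filter.2 ⟨mem_range.2 (by omega), j, hj, a, h⟩, h.getD_eq d⟩)
    · have := h.add_two_le_length
      exact Or.inr ⟨ℓ, mem_filter.2 ⟨mem_range.2 (by omega), j, hj, a, h⟩, h.getD_eq d⟩
  refine (card_le_card hsub).trans ((card_union_le _ _).trans (add_le_add
    ((card_union_le _ _).trans (add_le_add card_le_two card_image_le)) card_image_le))

theorem card_filter_nearSquareLeft_le (ℓ j : ℕ) :
    #{w ∈ steadyWords A n | ∃ c, NearSquareLeft w ℓ j c} ≤ #(steadyWords A (n - ℓ)) := by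
  refine card_le_card_of_injOn (·.take (n - ℓ)) (fun w hw => ?_) (fun w hw w' hw' h => ?_)
  · exact take_mem_steadyWords (mem_filter.1 hw).1 (Nat.sub_le n ℓ)
  · obtain ⟨hw, c, hc⟩ := mem_filter.1 hw
    obtain ⟨hw', c', hc'⟩ := mem_filter.1 hw'
    have hlen := (mem_steadyWords.1 hw).1
    have hlen' := (mem_steadyWords.1 hw').1
    exact hc.eq_of_take_eq hc' (hlen.trans hlen'.symm) (by simpa [hlen] using h)

theorem card_filter_nearSquareRight_le (hA : ∀ i, #(A i) = 7) (hj : j ≤ ℓ) :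
    #{w ∈ steadyWords A n | ∃ c, NearSquareRight w ℓ j c} ≤
      7 * #(steadyWords A (n - ℓ - 1)) := by
  obtain ⟨d, -⟩ : (A 0).Nonempty := card_pos.1 (by rw [hA]; norm_num)
  calc _ ≤ #(steadyWords A (n - ℓ - 1) ×ˢ A (n - ℓ - 1 + j)) := by
        refine card_le_card_of_injOn (fun w => (w.take (n - ℓ - 1), w.getD (n - ℓ - 1 + j) d))
          (fun w hw => ?_) (fun w hw w' hw' h => ?_)
        · obtain ⟨hw, c, hc⟩ := mem_filter.1 hw
          have := hc.add_two_le_length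
          have hlen := (mem_steadyWords.1 hw).1
          exact mem_product.2 ⟨take_mem_steadyWords hw (by omega),
            getD_mem_of_mem_steadyWords hw (by omega) d⟩
        · obtain ⟨hw, c, hc⟩ := mem_filter.1 hw
          obtain ⟨hw', c', hc'⟩ := mem_filter.1 hw'
          have hlen := (mem_steadyWords.1 hw).1
          have hlen' := (mem_steadyWords.1 hw').1
          obtain ⟨htake, hget⟩ := Prod.ext_iff.1 h
          exact hc.eq_of_take_eq hj d hc' (hlen.trans hlen'.symm) (by simpa [hlen] using htake)
            (by simpa [hlen] using hget)
    _ = 7 * #(steadyWords A (n - ℓ - 1)) := by rw [card_product, hA, mul_comm]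

theorem card_filter_le_sum_card_filter {β γ : Type*} {s : Finset β} {t : Finset γ}
    {Q : β → Prop} {P : β → γ → Prop} (hQ : ∀ x, Q x → ∃ j ∈ t, P x j) :
    #{x ∈ s | Q x} ≤ ∑ j ∈ t, #{x ∈ s | P x j} := by
  refine (card_le_card fun x hx => ?_).trans card_biUnion_le
  obtain ⟨hx, j, hj, h⟩ := (mem_filter.1 hx).imp_right (hQ x)
  exact mem_biUnion.2 ⟨j, hj, mem_filter.2 ⟨hx, h⟩⟩

theorem card_filter_hasNearSquareLeft_le (ℓ : ℕ) :
    #{w ∈ steadyWords A n | HasNearSquareLeft w ℓ} ≤ ℓ * #(steadyWords A (n - ℓ)) := by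
  calc _ ≤ ∑ j ∈ Icc 1 ℓ, #{w ∈ steadyWords A n | ∃ c, NearSquareLeft w ℓ j c} :=
        card_filter_le_sum_card_filter fun _ h => h
    _ ≤ _ := by
        simpa using sum_le_card_nsmul (Icc 1 ℓ) _ _ fun j _ => card_filter_nearSquareLeft_le ℓ j

theorem card_filter_hasNearSquareRight_le (hA : ∀ i, #(A i) = 7) (ℓ : ℕ) :
    #{w ∈ steadyWords A n | HasNearSquareRight w (ℓ + 1)} ≤
      #(steadyWords A (n - (ℓ + 1))) + ℓ * (7 * #(steadyWords A (n - (ℓ + 1) - 1))) := by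
  calc _ ≤ ∑ j ∈ range (ℓ + 1), #{w ∈ steadyWords A n | ∃ c, NearSquareRight w (ℓ + 1) j c} :=
        card_filter_le_sum_card_filter fun _ h => h
    _ ≤ _ := ?_
  rw [sum_range_succ', add_comm]
  refine add_le_add ?_ ?_
  · refine (card_le_card fun w hw => ?_).trans (card_filter_nearSquareLeft_le (ℓ + 1) (ℓ + 1))
    obtain ⟨hw, c, hc⟩ := mem_filter.1 hw
    exact mem_filter.2 ⟨hw, hc.exists_nearSquareLeft⟩
  · simpa using sum_le_card_nsmul (range ℓ) _ _ fun j hj =>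
      card_filter_nearSquareRight_le (n := n) hA (ℓ := ℓ + 1) (j := j + 1) (by simp at hj; omega)

theorem nine_mul_sum_range_le (m : ℕ) :
    9 * ∑ ℓ ∈ range m, (11 * ℓ - 3) * 4 ^ (m - ℓ) + 132 * m + 8 ≤ 35 * 4 ^ m := by
  induction m with
  | zero => simp
  | succ m ih =>
    rcases m with _ | m
    · simp
    have hshift : ∑ ℓ ∈ range (m + 1), (11 * ℓ - 3) * 4 ^ (m + 2 - ℓ) =
        4 * ∑ ℓ ∈ range (m + 1), (11 * ℓ - 3) * 4 ^ (m + 1 - ℓ) := by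
      rw [mul_sum]
      refine sum_congr rfl fun ℓ hℓ => ?_
      rw [show m + 2 - ℓ = m + 1 - ℓ + 1 by simp at hℓ; omega, pow_succ]
      ring
    rw [sum_range_succ, hshift, show m + 1 + 1 - (m + 1) = 1 by omega, pow_succ]
    omega

/-- With `C (n - ℓ) ≤ 4⁻ˡ C n`, the hypothesis bounds `N ℓ` by `(11ℓ - 3) 4⁻ˡ⁻¹ C n`, and
`∑ ℓ ≥ 1, (11ℓ - 3) 4⁻ˡ⁻¹ = 35/36 < 1`. -/
theorem sum_le_of_four_mul_le {C N : ℕ → ℕ} (hC : ∀ m < n, 4 * C m ≤ C (m + 1))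
    (hN : ∀ ℓ < n, 4 * N ℓ ≤ (11 * ℓ - 3) * C (n - ℓ)) : ∑ ℓ ∈ range n, N ℓ ≤ C n := by
  have hpow : ∀ k ≤ n, 4 ^ k * C (n - k) ≤ C n := by
    intro k
    induction k with
    | zero => simp
    | succ k ih =>
      intro hk
      calc 4 ^ (k + 1) * C (n - (k + 1)) = 4 ^ k * (4 * C (n - (k + 1))) := by ring
        _ ≤ 4 ^ k * C (n - k) := by
          gcongr
          simpa [show n - (k + 1) + 1 = n - k by omega] using hC (n - (k + 1)) (by omega)
        _ ≤ C n := ih (by omega)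
  have hterm : ∀ ℓ ∈ range n, 36 * 4 ^ n * N ℓ ≤ 9 * ((11 * ℓ - 3) * 4 ^ (n - ℓ)) * C n := by
    intro ℓ hℓ
    rw [mem_range] at hℓ
    calc 36 * 4 ^ n * N ℓ = 9 * 4 ^ (n - ℓ) * 4 ^ ℓ * (4 * N ℓ) := by
          rw [mul_assoc 9, ← pow_add, Nat.sub_add_cancel hℓ.le]; ring
      _ ≤ 9 * 4 ^ (n - ℓ) * 4 ^ ℓ * ((11 * ℓ - 3) * C (n - ℓ)) :=
          Nat.mul_le_mul_left _ (hN ℓ hℓ)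
      _ = 9 * ((11 * ℓ - 3) * 4 ^ (n - ℓ)) * (4 ^ ℓ * C (n - ℓ)) := by ring
      _ ≤ 9 * ((11 * ℓ - 3) * 4 ^ (n - ℓ)) * C n := by gcongr; exact hpow ℓ hℓ.le
  have hsum : 4 ^ n * (36 * ∑ ℓ ∈ range n, N ℓ) ≤ 4 ^ n * (35 * C n) :=
    calc 4 ^ n * (36 * ∑ ℓ ∈ range n, N ℓ) = ∑ ℓ ∈ range n, 36 * 4 ^ n * N ℓ := by
          rw [mul_sum, mul_sum]; ring_nf
      _ ≤ ∑ ℓ ∈ range n, 9 * ((11 * ℓ - 3) * 4 ^ (n - ℓ)) * C n := sum_le_sum hterm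
      _ = 9 * (∑ ℓ ∈ range n, (11 * ℓ - 3) * 4 ^ (n - ℓ)) * C n := by
          rw [← sum_mul, ← mul_sum]
      _ ≤ 35 * 4 ^ n * C n := Nat.mul_le_mul_right _ (by linarith [nine_mul_sum_range_le n])
      _ = 4 ^ n * (35 * C n) := by ring
  have := Nat.le_of_mul_le_mul_left hsum (by positivity)
  omega

theorem four_mul_card_steadyWords_le (hA : ∀ i, #(A i) = 7) (n : ℕ) :
    4 * #(steadyWords A n) ≤ #(steadyWords A (n + 1)) := by
  induction n using Nat.strong_induction_on with
  | _ n ih =>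
  obtain ⟨d, -⟩ : (A n).Nonempty := card_pos.1 (by rw [hA]; norm_num)
  set L₁ := fun w : List α => #{ℓ ∈ range n | HasNearSquareLeft w ℓ}
  set L₂ := fun w : List α => #{ℓ ∈ range n | HasNearSquareRight w ℓ}
  have hw7 : ∀ w ∈ steadyWords A n, 7 ≤ #{a ∈ A n | Steady (w ++ [a])} + 2 + (L₁ w + L₂ w) := by
    intro w hw
    obtain ⟨rfl, hw, -⟩ := mem_steadyWords.1 hw
    have := card_filter_not_steady_append_le hw d (A w.length)
    have := card_filter_add_card_filter_not (s := A w.length) (Steady <| w ++ [·])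
    rw [hA] at this
    dsimp only [L₁, L₂]
    omega
  have hL : ∑ w ∈ steadyWords A n, (L₁ w + L₂ w) ≤ #(steadyWords A n) := by
    calc _ = ∑ ℓ ∈ range n, (#{w ∈ steadyWords A n | HasNearSquareLeft w ℓ} +
          #{w ∈ steadyWords A n | HasNearSquareRight w ℓ}) := by
          rw [sum_add_distrib, sum_add_distrib]
          exact congrArg₂ (· + ·) (sum_card_bipartiteAbove_eq_sum_card_bipartiteBelow _)
            (sum_card_bipartiteAbove_eq_sum_card_bipartiteBelow _)
      _ ≤ _ := sum_le_of_four_mul_le (fun m hm => ih m hm) fun ℓ hℓ => ?_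
    rcases ℓ with _ | ℓ
    · simp [HasNearSquareLeft, HasNearSquareRight]
    have hleft := card_filter_hasNearSquareLeft_le (A := A) (n := n) (ℓ + 1)
    have hright := card_filter_hasNearSquareRight_le (n := n) hA ℓ
    have hgrowth := ih (n - (ℓ + 1) - 1) (by omega)
    rw [show n - (ℓ + 1) - 1 + 1 = n - (ℓ + 1) by omega] at hgrowth
    rw [show 11 * (ℓ + 1) - 3 = 11 * ℓ + 8 by omega]
    nlinarith
  have h7 := card_nsmul_le_sum _ _ _ hw7
  simp only [sum_add_distrib, sum_const, smul_eq_mul] at h7 hL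
  linarith [sum_card_filter_steady_append_le (A := A) (n := n)]

end Counting

end

/-- Given alphabets `A 0, A 1, …`, each of size 7, for every `N` there are at least
`4 ^ N` steady words of length `N` whose `i`-th letter belongs to `A i`. -/
theorem stmt16 {α : Type*} (A : ℕ → Finset α) (hA : ∀ i, (A i).card = 7) (N : ℕ) :
    4 ^ N ≤ {W : List α | W.length = N ∧ Steady W ∧
      ∀ i, (h : i < W.length) → W[i] ∈ A i}.ncard := by
  classical
  have hset : {W : List α | W.length = N ∧ Steady W ∧ ∀ i, (h : i < W.length) → W[i] ∈ A i} =
      steadyWords A N := by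
    ext w
    exact mem_steadyWords.symm
  rw [hset, Set.ncard_coe_finset]
  clear hset
  induction N with
  | zero => rw [card_steadyWords_zero, pow_zero]
  | succ N ih =>
    rw [pow_succ, mul_comm]
    exact (Nat.mul_le_mul_left 4 ih).trans (four_mul_card_steadyWords_le hA N)
end
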